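/- arXiv:2406.17096 — 2 statements merged into one kernel-verified Lean document; each statement's English description precedes it below -/
import Mathlib

section
/- Strong duality for the Kullback–Leibler uncertainty set: Let S be a finite nonempty set, p a pmf on S, v : S → ℝ any function, and σ ≥ 0. Then inf{ E_q[v] : q a pmf on S with q(s) = 0 whenever p(s) = 0 and KL(q‖p) ≤ σ } = sup_{α > 0} { −α · log( E_p[ exp(−v/α) ] ) − α·σ }. -/
open Finset

/-- `p` is a probability mass function on the finite nonempty type `S`. -/
def IsPmf {S : Type*} [Fintype S] (p : S → ℝ) : Prop :=
  (∀ s, 0 ≤ p s) ∧ ∑ s, p s = 1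

/-!
Weak duality is the Donsker–Varadhan (Gibbs) inequality `E_q[w] - KL(q‖p) ≤ log E_p[exp w]`,
applied with `w = -v/α`. For the converse consider the Gibbs tilts `q_β ∝ p·exp(-βv)`, which
attain that inequality: `E_{q_β}[v]` equals the dual objective at `α = 1/β` plus
`(σ - KL(q_β‖p))/β`. The divergence `KL(q_β‖p)` is continuous in `β` and vanishes at `β = 0`.
If it reaches `σ` at some `β > 0`, then `q_β` is primal feasible and closes the gap. Otherwise,
for `σ > 0`, every `q_β` is feasible and the gap is at most `σ/β → 0`. For `σ = 0`, the dual
objective at `α = 1/β` is minus the slope at `0` of `β ↦ log E_p[exp(-βv)]`, which tends to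
`E_p[v]` as `β → 0⁺`.
-/

open Real Filter Topology

section

variable {S : Type*} [Fintype S]

noncomputable def klDiv (q p : S → ℝ) : ℝ :=
  ∑ s ∈ univ.filter (fun s => 0 < q s), q s * log (q s / p s)

noncomputable def logPartition (p w : S → ℝ) : ℝ :=
  log (∑ s, p s * exp (w s))

noncomputable def tilted (p w : S → ℝ) (s : S) : ℝ :=
  p s * exp (w s) / ∑ t, p t * exp (w t)

noncomputable def dualObjective (p v : S → ℝ) (σ α : ℝ) : ℝ :=
  -α * log (∑ s, p s * exp (-(v s) / α)) - α * σ

def primalValues (p v : S → ℝ) (σ : ℝ) : Set ℝ :=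
  {x | ∃ q : S → ℝ, IsPmf q ∧ (∀ s, p s = 0 → q s = 0) ∧ klDiv q p ≤ σ ∧ x = ∑ s, q s * v s}

def dualValues (p v : S → ℝ) (σ : ℝ) : Set ℝ :=
  {x | ∃ α : ℝ, 0 < α ∧ x = dualObjective p v σ α}

lemma sum_filter_pos_mul {q : S → ℝ} (hq : ∀ s, 0 ≤ q s) (f : S → ℝ) :
    ∑ s ∈ univ.filter (fun s => 0 < q s), q s * f s = ∑ s, q s * f s :=
  sum_filter_of_ne fun s _ h => (hq s).lt_of_ne' (left_ne_zero_of_mul h)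

lemma exists_pos_eq_or_forall_pos_lt {f : ℝ → ℝ} (hf : Continuous f) {c : ℝ} (h0 : f 0 < c) :
    (∃ x, 0 < x ∧ f x = c) ∨ ∀ x, 0 < x → f x < c := by
  refine or_iff_not_imp_right.2 fun h => ?_
  obtain ⟨b, hb, hcb⟩ : ∃ b, 0 < b ∧ c ≤ f b := by simpa using h
  obtain ⟨x, hx, hfx⟩ := intermediate_value_Icc hb.le hf.continuousOn ⟨h0.le, hcb⟩
  exact ⟨x, hx.1.lt_of_ne (by rintro rfl; exact h0.ne hfx), hfx⟩

lemma klDiv_self (p : S → ℝ) : klDiv p p = 0 :=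
  sum_eq_zero fun s hs => by rw [div_self (mem_filter.1 hs).2.ne', log_one, mul_zero]

lemma tilted_eq_zero {p : S → ℝ} (w : S → ℝ) {s : S} (hs : p s = 0) : tilted p w s = 0 := by
  simp [tilted, hs]

lemma dualObjective_inv (p v : S → ℝ) (σ β : ℝ) :
    dualObjective p v σ β⁻¹ = -(logPartition p (fun s => -(β * v s)) + σ) / β := by
  simp only [dualObjective, logPartition, div_inv_eq_mul, neg_mul, mul_comm (v _)]
  ring

namespace IsPmf

variable {p : S → ℝ}

lemma exists_pos (hp : IsPmf p) : ∃ s, 0 < p s := by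
  by_contra! h
  have := sum_nonpos fun s (_ : s ∈ univ) => h s
  linarith [hp.2]

lemma sum_mul_exp_pos (hp : IsPmf p) (w : S → ℝ) : 0 < ∑ s, p s * exp (w s) := by
  obtain ⟨s, hs⟩ := hp.exists_pos
  exact sum_pos' (fun t _ => mul_nonneg (hp.1 t) (exp_pos _).le)
    ⟨s, mem_univ s, mul_pos hs (exp_pos _)⟩

lemma sum_mul_sub_klDiv_le_logPartition (hp : IsPmf p) {q : S → ℝ} (hq : IsPmf q)
    (hqp : ∀ s, p s = 0 → q s = 0) (w : S → ℝ) :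
    ∑ s, q s * w s - klDiv q p ≤ logPartition p w := by
  set t := univ.filter (fun s => 0 < q s)
  have hqt : ∀ s ∈ t, 0 < q s := fun s hs => (mem_filter.1 hs).2
  have hpt : ∀ s ∈ t, 0 < p s := fun s hs =>
    (hp.1 s).lt_of_ne' fun h => (hqt s hs).ne' (hqp s h)
  have hq1 : ∑ s ∈ t, q s = 1 := by simpa [hq.2] using sum_filter_pos_mul hq.1 fun _ => 1
  obtain ⟨s₀, hs₀⟩ : t.Nonempty := nonempty_of_sum_ne_zero (by rw [hq1]; exact one_ne_zero)
  have hlhs : ∑ s ∈ t, q s • log (p s * exp (w s) / q s) = ∑ s, q s * w s - klDiv q p := by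
    rw [klDiv, ← sum_filter_pos_mul hq.1 w, ← sum_sub_distrib]
    refine sum_congr rfl fun s hs => ?_
    have hqs := (hqt s hs).ne'
    have hps := (hpt s hs).ne'
    rw [smul_eq_mul, log_div (by positivity) hqs, log_mul hps (exp_ne_zero _), log_exp,
      log_div hqs hps]
    ring
  have hrhs : ∑ s ∈ t, q s • (p s * exp (w s) / q s) = ∑ s ∈ t, p s * exp (w s) :=
    sum_congr rfl fun s hs => by rw [smul_eq_mul, mul_div_cancel₀ _ (hqt s hs).ne']
  calc ∑ s, q s * w s - klDiv q p
      = ∑ s ∈ t, q s • log (p s * exp (w s) / q s) := hlhs.symm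
    _ ≤ log (∑ s ∈ t, q s • (p s * exp (w s) / q s)) :=
      strictConcaveOn_log_Ioi.concaveOn.le_map_sum (fun s hs => (hqt s hs).le) hq1
        fun s hs => div_pos (mul_pos (hpt s hs) (exp_pos _)) (hqt s hs)
    _ ≤ logPartition p w := by
      rw [hrhs]
      refine log_le_log (sum_pos (fun s hs => mul_pos (hpt s hs) (exp_pos _)) ⟨s₀, hs₀⟩) ?_
      exact sum_le_sum_of_subset_of_nonneg (subset_univ t)
        fun s _ _ => mul_nonneg (hp.1 s) (exp_pos _).le

lemma klDiv_nonneg (hp : IsPmf p) {q : S → ℝ} (hq : IsPmf q) (hqp : ∀ s, p s = 0 → q s = 0) :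
    0 ≤ klDiv q p := by
  simpa [logPartition, hp.2] using hp.sum_mul_sub_klDiv_le_logPartition hq hqp 0

lemma _root_.isPmf_tilted (hp : IsPmf p) (w : S → ℝ) : IsPmf (tilted p w) :=
  ⟨fun s => div_nonneg (mul_nonneg (hp.1 s) (exp_pos _).le) (hp.sum_mul_exp_pos w).le, by
    change ∑ s, p s * exp (w s) / _ = 1
    rw [← sum_div, div_self (hp.sum_mul_exp_pos w).ne']⟩

lemma klDiv_tilted (hp : IsPmf p) (w : S → ℝ) :
    klDiv (tilted p w) p = ∑ s, tilted p w s * w s - logPartition p w := by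
  have hZ := hp.sum_mul_exp_pos w
  rw [klDiv, sum_filter_pos_mul (isPmf_tilted hp w).1, ← mul_one (logPartition p w),
    ← (isPmf_tilted hp w).2, mul_sum, ← sum_sub_distrib]
  refine sum_congr rfl fun s _ => ?_
  rcases (hp.1 s).eq_or_lt with h | h
  · simp [tilted_eq_zero w h.symm]
  · have : tilted p w s / p s = exp (w s) / ∑ t, p t * exp (w t) := by
      rw [tilted]
      field_simp
    rw [this, log_div (exp_ne_zero _) hZ.ne', log_exp, logPartition]
    ring

lemma continuous_klDiv_tilted (hp : IsPmf p) (v : S → ℝ) :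
    Continuous fun β => klDiv (tilted p fun s => -(β * v s)) p := by
  simp only [hp.klDiv_tilted, tilted, logPartition]
  have hZ : ∀ β : ℝ, ∑ s, p s * exp (-(β * v s)) ≠ 0 := fun β => (hp.sum_mul_exp_pos _).ne'
  fun_prop (disch := exact hZ _)

lemma klDiv_tilted_zero (hp : IsPmf p) (v : S → ℝ) :
    klDiv (tilted p fun s => -(0 * v s)) p = 0 := by
  simp [hp.klDiv_tilted, logPartition, hp.2]

lemma hasDerivAt_logPartition_zero (hp : IsPmf p) (v : S → ℝ) :
    HasDerivAt (fun β => logPartition p fun s => -(β * v s)) (-∑ s, p s * v s) 0 := by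
  have hZ : HasDerivAt (fun β => ∑ s, p s * exp (-(β * v s))) (∑ s, p s * -v s) 0 :=
    HasDerivAt.fun_sum fun s _ => by
      simpa using ((hasDerivAt_mul_const (x := 0) (v s)).neg.exp).const_mul (p s)
  simpa [logPartition, hp.2] using hZ.log (by simp [hp.2])

lemma sum_tilted_mul_eq_dualObjective (hp : IsPmf p) (v : S → ℝ) (σ : ℝ) {β : ℝ}
    (hβ : β ≠ 0) :
    ∑ s, tilted p (fun s => -(β * v s)) s * v s =
      dualObjective p v σ β⁻¹ + (σ - klDiv (tilted p fun s => -(β * v s)) p) / β := by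
  rw [dualObjective_inv, hp.klDiv_tilted]
  simp only [mul_neg, sum_neg_distrib, mul_left_comm _ β, ← mul_sum]
  field_simp
  ring

lemma dualObjective_le_sum_mul (hp : IsPmf p) {q : S → ℝ} (hq : IsPmf q)
    (hqp : ∀ s, p s = 0 → q s = 0) {σ : ℝ} (hkl : klDiv q p ≤ σ) (v : S → ℝ) {α : ℝ}
    (hα : 0 < α) : dualObjective p v σ α ≤ ∑ s, q s * v s := by
  have h := hp.sum_mul_sub_klDiv_le_logPartition hq hqp fun s => -(v s) / α
  have hsum : ∑ s, q s * (-(v s) / α) = -(∑ s, q s * v s) / α := by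
    rw [← sum_neg_distrib, sum_div]
    exact sum_congr rfl fun s _ => by ring
  rw [hsum] at h
  have h' := mul_le_mul_of_nonneg_left h hα.le
  rw [mul_sub, mul_div_cancel₀ _ hα.ne'] at h'
  have := mul_le_mul_of_nonneg_left hkl hα.le
  change -α * logPartition p (fun s => -(v s) / α) - α * σ ≤ _
  linarith

lemma le_of_mem_dualValues_of_mem_primalValues (hp : IsPmf p) {v : S → ℝ} {σ x d : ℝ}
    (hx : x ∈ primalValues p v σ) (hd : d ∈ dualValues p v σ) : d ≤ x := by
  obtain ⟨q, hq, hqp, hkl, rfl⟩ := hx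
  obtain ⟨α, hα, rfl⟩ := hd
  exact hp.dualObjective_le_sum_mul hq hqp hkl v hα

lemma sum_mul_mem_primalValues (hp : IsPmf p) (v : S → ℝ) {σ : ℝ} (hσ : 0 ≤ σ) :
    ∑ s, p s * v s ∈ primalValues p v σ :=
  ⟨p, hp, fun _ h => h, (klDiv_self p).trans_le hσ, rfl⟩

lemma bddBelow_primalValues (hp : IsPmf p) (v : S → ℝ) (σ : ℝ) :
    BddBelow (primalValues p v σ) :=
  ⟨dualObjective p v σ 1, fun _ hx =>
    hp.le_of_mem_dualValues_of_mem_primalValues hx ⟨1, one_pos, rfl⟩⟩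

lemma bddAbove_dualValues (hp : IsPmf p) (v : S → ℝ) {σ : ℝ} (hσ : 0 ≤ σ) :
    BddAbove (dualValues p v σ) :=
  ⟨_, fun _ hd =>
    hp.le_of_mem_dualValues_of_mem_primalValues (hp.sum_mul_mem_primalValues v hσ) hd⟩

lemma sSup_dualValues_le_sInf_primalValues (hp : IsPmf p) (v : S → ℝ) {σ : ℝ} (hσ : 0 ≤ σ) :
    sSup (dualValues p v σ) ≤ sInf (primalValues p v σ) :=
  csSup_le ⟨_, 1, one_pos, rfl⟩ fun _ hd =>
    le_csInf ⟨_, hp.sum_mul_mem_primalValues v hσ⟩ fun _ hx =>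
      hp.le_of_mem_dualValues_of_mem_primalValues hx hd

lemma sInf_primalValues_le_sSup_dualValues_add (hp : IsPmf p) (v : S → ℝ) {σ β : ℝ}
    (hσ : 0 ≤ σ) (hβ : 0 < β) (hkl : klDiv (tilted p fun s => -(β * v s)) p ≤ σ) :
    sInf (primalValues p v σ) ≤
      sSup (dualValues p v σ) + (σ - klDiv (tilted p fun s => -(β * v s)) p) / β :=
  calc sInf (primalValues p v σ)
      ≤ ∑ s, tilted p (fun s => -(β * v s)) s * v s :=
        csInf_le (hp.bddBelow_primalValues v σ)
          ⟨_, isPmf_tilted hp _, fun _ => tilted_eq_zero _, hkl, rfl⟩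
    _ = dualObjective p v σ β⁻¹ + (σ - klDiv (tilted p fun s => -(β * v s)) p) / β :=
        hp.sum_tilted_mul_eq_dualObjective v σ hβ.ne'
    _ ≤ _ := by
        gcongr
        exact le_csSup (hp.bddAbove_dualValues v hσ) ⟨β⁻¹, inv_pos.2 hβ, rfl⟩

lemma sum_mul_le_sSup_dualValues_zero (hp : IsPmf p) (v : S → ℝ) :
    ∑ s, p s * v s ≤ sSup (dualValues p v 0) := by
  have hslope := (hasDerivAt_iff_tendsto_slope.mp (hp.hasDerivAt_logPartition_zero v)).neg
  rw [neg_neg] at hslope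
  have hlim : Tendsto (fun β => dualObjective p v 0 β⁻¹) (𝓝[>] 0) (𝓝 (∑ s, p s * v s)) := by
    refine (hslope.mono_left (nhdsWithin_mono _ fun β hβ => ne_of_gt hβ)).congr fun β => ?_
    simp [slope_def_field, dualObjective_inv, logPartition, hp.2, neg_div]
  exact le_of_tendsto hlim (eventually_nhdsWithin_of_forall fun β hβ =>
    le_csSup (hp.bddAbove_dualValues v le_rfl) ⟨β⁻¹, inv_pos.2 hβ, rfl⟩)

lemma sInf_primalValues_le_sSup_dualValues (hp : IsPmf p) (v : S → ℝ) {σ : ℝ} (hσ : 0 ≤ σ) :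
    sInf (primalValues p v σ) ≤ sSup (dualValues p v σ) := by
  rcases hσ.eq_or_lt with rfl | hσ
  · calc sInf (primalValues p v 0)
        ≤ ∑ s, p s * v s :=
          csInf_le (hp.bddBelow_primalValues v 0) (hp.sum_mul_mem_primalValues v le_rfl)
      _ ≤ sSup (dualValues p v 0) := hp.sum_mul_le_sSup_dualValues_zero v
  rcases exists_pos_eq_or_forall_pos_lt (hp.continuous_klDiv_tilted v) (c := σ)
    (by rwa [hp.klDiv_tilted_zero]) with ⟨β, hβ, hkl⟩ | hlt
  · simpa [hkl] using hp.sInf_primalValues_le_sSup_dualValues_add v hσ.le hβ hkl.le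
  refine le_of_forall_pos_le_add fun ε hε => ?_
  have hβ : 0 < σ / ε := div_pos hσ hε
  calc sInf (primalValues p v σ)
      ≤ sSup (dualValues p v σ) +
          (σ - klDiv (tilted p fun s => -(σ / ε * v s)) p) / (σ / ε) :=
        hp.sInf_primalValues_le_sSup_dualValues_add v hσ.le hβ (hlt _ hβ).le
    _ ≤ sSup (dualValues p v σ) + σ / (σ / ε) := by
        gcongr
        exact sub_le_self _ (hp.klDiv_nonneg (isPmf_tilted hp _) fun _ => tilted_eq_zero _)
    _ = sSup (dualValues p v σ) + ε := by field_simp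

end IsPmf

end

theorem kl_strong_duality_general
    {S : Type*} [Fintype S]
    (p : S → ℝ) (hp : IsPmf p)
    (v : S → ℝ)
    (σ : ℝ) (hσ : 0 ≤ σ) :
    sInf {x : ℝ | ∃ q : S → ℝ, IsPmf q ∧
        (∀ s, p s = 0 → q s = 0) ∧
        (∑ s ∈ Finset.univ.filter (fun s => 0 < q s), q s * Real.log (q s / p s)) ≤ σ ∧
        x = ∑ s, q s * v s}
      =
    sSup {x : ℝ | ∃ α : ℝ, 0 < α ∧
        x = -α * Real.log (∑ s, p s * Real.exp (-(v s) / α)) - α * σ} := by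
  change sInf (primalValues p v σ) = sSup (dualValues p v σ)
  exact le_antisymm (hp.sInf_primalValues_le_sSup_dualValues v hσ)
    (hp.sSup_dualValues_le_sInf_primalValues v hσ)

/-- Strong duality for the Kullback–Leibler uncertainty set. -/
theorem kl_strong_duality
    {S : Type*} [Fintype S] [Nonempty S]
    (p : S → ℝ) (hp : IsPmf p)
    (v : S → ℝ)
    (σ : ℝ) (hσ : 0 ≤ σ) :
    sInf {x : ℝ | ∃ q : S → ℝ, IsPmf q ∧
        (∀ s, p s = 0 → q s = 0) ∧
        (∑ s ∈ Finset.univ.filter (fun s => 0 < q s), q s * Real.log (q s / p s)) ≤ σ ∧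
        x = ∑ s, q s * v s}
      =
    sSup {x : ℝ | ∃ α : ℝ, 0 < α ∧
        x = -α * Real.log (∑ s, p s * Real.exp (-(v s) / α)) - α * σ} :=
  kl_strong_duality_general p hp v σ hσ
end

section
/- Expected uniform bias of empirical total-variation dual values (bias part of Theorem 4.1, TV case): Let S and A be finite nonempty sets, σ ≥ 0, r_max > 0, γ ∈ [0,1), and V : S → ℝ with 0 ≤ V(s) ≤ r_max/(1−γ) for all s. For each (s,a) ∈ S × A let p_{s,a} be a pmf on S, let m ∈ ℕ, set n = 2^{m+1}, and suppose n ≥ 2(m+1)·log 2 + log(18·|S|·|A|). For each (s,a) let p̂_{s,a} be the empirical pmf of n i.i.d. samples from p_{s,a}, with all samples across all pairs (s,a) mutually independent. Then E[ max_{(s,a) ∈ S×A} | f*_TV(p̂_{s,a}, V) − f*_TV(p_{s,a}, V) | ] ≤ (r_max/(1−γ)) · 2^{−(m+1)/2} · ( 2^{−(m+1)/2} + 3·sqrt( 2(m+1)·log 2 + log(18·|S|·|A|) ) ). -/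
open Finset MeasureTheory ProbabilityTheory

/-- The total-variation dual value with uncertainty level `σ`:
`f*_TV(p, v) = sup_{α ≥ 0} { E_p[(v)_α] − σ·(α − min_s v(s)) }`. -/
noncomputable def fstarTV {S : Type*} [Fintype S] (σ : ℝ) (p v : S → ℝ) : ℝ :=
  sSup {x : ℝ | ∃ α : ℝ, 0 ≤ α ∧
    x = (∑ s, p s * min (v s) α) - σ * (α - ⨅ s, v s)}

/-!
For `0 ≤ V ≤ M`, the objectives of the TV dual at level `α` for two pmfs `q` and `p` differ by
`∑ s, (q - p) s * min (V s) α`. By the layer-cake formula this is an integral over `t ∈ (0, α)`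
of the mass that `q - p` gives to the upper level sets of `V`, and levels `α > M` never beat
`α = M`; hence `|f*_TV(q, V) - f*_TV(p, V)| ≤ M · max_u |(q - p) {s | V u ≤ V s}|`.
For the empirical pmf each of these masses is a mean of `n` independent indicators. Hoeffding's
inequality and a union bound over the `|S|² |A|` triples `(s, a, u)` bound every deviation by
`3 √(L / n)`, where `L = log (18 n² |S| |A|)`, outside an event of probability at most `1 / n`,
on which the bias is at most `M`.
-/

open Real

section UpperLevelSets

variable {S : Type*} [Fintype S]

noncomputable def upperLevelDev (V d : S → ℝ) : ℝ :=
  ⨆ u : S, |∑ s ∈ univ.filter (fun s => V u ≤ V s), d s|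

lemma abs_sum_upperLevel_le_upperLevelDev (V d : S → ℝ) (u : S) :
    |∑ s ∈ univ.filter (fun s => V u ≤ V s), d s| ≤ upperLevelDev V d :=
  le_ciSup (f := fun u => |∑ s ∈ univ.filter (fun s => V u ≤ V s), d s|)
    (Set.finite_range _).bddAbove u

lemma upperLevelDev_nonneg (V d : S → ℝ) : 0 ≤ upperLevelDev V d :=
  Real.iSup_nonneg fun _ => abs_nonneg _

lemma upperLevelDev_sub_comm (V p q : S → ℝ) :
    upperLevelDev V (p - q) = upperLevelDev V (q - p) := by
  simp only [upperLevelDev, Pi.sub_apply, sum_sub_distrib, abs_sub_comm]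

-- A nonempty strict upper level set `{t < V}` is the upper level set of its minimizer.
lemma abs_sum_filter_lt_le_upperLevelDev (V d : S → ℝ) (t : ℝ) :
    |∑ s ∈ univ.filter (fun s => t < V s), d s| ≤ upperLevelDev V d := by
  rcases (univ.filter (fun s => t < V s)).eq_empty_or_nonempty with hempty | hne
  · simpa [hempty] using upperLevelDev_nonneg V d
  obtain ⟨u, hu, hmin⟩ := exists_min_image _ V hne
  have hlevel : univ.filter (fun s => t < V s) = univ.filter (fun s => V u ≤ V s) := by
    ext s
    simp only [mem_filter, mem_univ, true_and] at hu hmin ⊢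
    exact ⟨fun hs => hmin s hs, hu.trans_le⟩
  rw [hlevel]
  exact abs_sum_upperLevel_le_upperLevelDev V d u

lemma IsPmf.sum_mem_Icc {p : S → ℝ} (hp : IsPmf p) (B : Finset S) :
    ∑ s ∈ B, p s ∈ Set.Icc 0 1 :=
  ⟨sum_nonneg fun s _ => hp.1 s,
    hp.2 ▸ sum_le_sum_of_subset_of_nonneg (subset_univ B) fun s _ _ => hp.1 s⟩

lemma upperLevelDev_sub_le_one (V : S → ℝ) {p q : S → ℝ} (hp : IsPmf p) (hq : IsPmf q) :
    upperLevelDev V (q - p) ≤ 1 := by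
  refine Real.iSup_le (fun u => ?_) zero_le_one
  have hpB := hp.sum_mem_Icc (univ.filter fun s => V u ≤ V s)
  have hqB := hq.sum_mem_Icc (univ.filter fun s => V u ≤ V s)
  rw [Pi.sub_def, sum_sub_distrib, abs_le]
  constructor <;> linarith [hpB.1, hpB.2, hqB.1, hqB.2]

end UpperLevelSets

section LayerCake

variable {S : Type*} [Fintype S]

lemma min_eq_integral_indicator {c α : ℝ} (hc : 0 ≤ c) (hα : 0 ≤ α) :
    min c α = ∫ t in Set.Ioo 0 α, (Set.Iio c).indicator 1 t := by
  rw [integral_indicator_one measurableSet_Iio, measureReal_restrict_apply measurableSet_Iio,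
    Set.Iio_inter_Ioo, Real.volume_real_Ioo_of_le (le_min hc hα), sub_zero]

lemma sum_mul_min_eq_integral {V : S → ℝ} (hV : ∀ s, 0 ≤ V s) {α : ℝ} (hα : 0 ≤ α)
    (d : S → ℝ) :
    ∑ s, d s * min (V s) α = ∫ t in Set.Ioo 0 α, ∑ s ∈ univ.filter (fun s => t < V s), d s := by
  have hint : ∀ s, Integrable ((Set.Iio (V s)).indicator (1 : ℝ → ℝ))
      (volume.restrict (Set.Ioo 0 α)) := fun s =>
    (integrable_const 1).indicator measurableSet_Iio
  simp_rw [sum_filter, min_eq_integral_indicator (hV _) hα, ← integral_const_mul]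
  rw [← integral_finsetSum _ fun s _ => (hint s).const_mul (d s)]
  congr 1 with t
  refine sum_congr rfl fun s _ => ?_
  by_cases h : t < V s <;> simp [h]

lemma abs_sum_mul_min_le {V : S → ℝ} (hV : ∀ s, 0 ≤ V s) {α : ℝ} (hα : 0 ≤ α) (d : S → ℝ) :
    |∑ s, d s * min (V s) α| ≤ α * upperLevelDev V d := by
  rw [sum_mul_min_eq_integral hV hα, ← Real.norm_eq_abs]
  have hbound := norm_setIntegral_le_of_norm_le_const (μ := volume) measure_Ioo_lt_top
    fun t (_ : t ∈ Set.Ioo 0 α) => (Real.norm_eq_abs _).trans_le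
      (abs_sum_filter_lt_le_upperLevelDev V d t)
  rwa [Real.volume_real_Ioo_of_le hα, sub_zero, mul_comm] at hbound

end LayerCake

section TVDual

variable {S : Type*} [Fintype S] {σ : ℝ} {p q V : S → ℝ}

noncomputable def tvObjective (σ : ℝ) (p v : S → ℝ) (α : ℝ) : ℝ :=
  (∑ s, p s * min (v s) α) - σ * (α - ⨅ s, v s)

lemma fstarTV_eq_sSup_image (σ : ℝ) (p v : S → ℝ) :
    fstarTV σ p v = sSup (tvObjective σ p v '' Set.Ici 0) := by
  simp only [fstarTV, tvObjective, Set.image, Set.mem_Ici, eq_comm]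

lemma tvObjective_le (hσ : 0 ≤ σ) (hp : ∀ s, 0 ≤ p s) {α : ℝ} (hα : 0 ≤ α) :
    tvObjective σ p V α ≤ ∑ s, p s * V s + σ * ⨅ s, V s := by
  have hmin : ∑ s, p s * min (V s) α ≤ ∑ s, p s * V s :=
    sum_le_sum fun s _ => mul_le_mul_of_nonneg_left (min_le_left _ _) (hp s)
  unfold tvObjective
  nlinarith

lemma tvObjective_le_fstarTV (hσ : 0 ≤ σ) (hp : ∀ s, 0 ≤ p s) {α : ℝ} (hα : 0 ≤ α) :
    tvObjective σ p V α ≤ fstarTV σ p V := by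
  rw [fstarTV_eq_sSup_image]
  refine le_csSup ⟨∑ s, p s * V s + σ * ⨅ s, V s, ?_⟩ (Set.mem_image_of_mem _ hα)
  rintro _ ⟨β, hβ, rfl⟩
  exact tvObjective_le hσ hp hβ

lemma fstarTV_le_of_forall_le {b : ℝ} (h : ∀ α, 0 ≤ α → tvObjective σ p V α ≤ b) :
    fstarTV σ p V ≤ b := by
  rw [fstarTV_eq_sSup_image]
  exact csSup_le (Set.nonempty_Ici.image _) (Set.forall_mem_image.2 h)

lemma tvObjective_le_of_le (hσ : 0 ≤ σ) {M : ℝ} (hVM : ∀ s, V s ≤ M) {α : ℝ} (hMα : M ≤ α) :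
    tvObjective σ p V α ≤ tvObjective σ p V M := by
  have hsum : ∑ s, p s * min (V s) α = ∑ s, p s * min (V s) M := by
    refine sum_congr rfl fun s _ => ?_
    rw [min_eq_left ((hVM s).trans hMα), min_eq_left (hVM s)]
  unfold tvObjective
  rw [hsum]
  nlinarith

lemma tvObjective_sub_tvObjective (σ : ℝ) (p q V : S → ℝ) (α : ℝ) :
    tvObjective σ q V α - tvObjective σ p V α = ∑ s, (q - p) s * min (V s) α := by
  simp only [tvObjective, Pi.sub_apply, sub_mul, sum_sub_distrib]
  ring

lemma fstarTV_le_add (hσ : 0 ≤ σ) (hp : ∀ s, 0 ≤ p s) (hV : ∀ s, 0 ≤ V s) {M : ℝ}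
    (hM : 0 ≤ M) (hVM : ∀ s, V s ≤ M) :
    fstarTV σ q V ≤ fstarTV σ p V + M * upperLevelDev V (q - p) := by
  have hsmall : ∀ α, 0 ≤ α → α ≤ M →
      tvObjective σ q V α ≤ fstarTV σ p V + M * upperLevelDev V (q - p) := by
    intro α hα hαM
    calc tvObjective σ q V α
        = tvObjective σ p V α + ∑ s, (q - p) s * min (V s) α := by
          rw [← tvObjective_sub_tvObjective]; ring
      _ ≤ fstarTV σ p V + α * upperLevelDev V (q - p) :=
          add_le_add (tvObjective_le_fstarTV hσ hp hα)
            ((le_abs_self _).trans (abs_sum_mul_min_le hV hα _))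
      _ ≤ fstarTV σ p V + M * upperLevelDev V (q - p) := by
          gcongr
          exact upperLevelDev_nonneg V _
  refine fstarTV_le_of_forall_le fun α hα => ?_
  rcases le_total α M with hαM | hMα
  · exact hsmall α hα hαM
  · exact (tvObjective_le_of_le hσ hVM hMα).trans (hsmall M hM le_rfl)

lemma abs_fstarTV_sub_le (hσ : 0 ≤ σ) (hp : ∀ s, 0 ≤ p s) (hq : ∀ s, 0 ≤ q s)
    (hV : ∀ s, 0 ≤ V s) {M : ℝ} (hM : 0 ≤ M) (hVM : ∀ s, V s ≤ M) :
    |fstarTV σ q V - fstarTV σ p V| ≤ M * upperLevelDev V (q - p) := by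
  have hqp := fstarTV_le_add (q := q) hσ hp hV hM hVM
  have hpq := fstarTV_le_add (q := p) hσ hq hV hM hVM
  rw [upperLevelDev_sub_comm] at hpq
  rw [abs_sub_le_iff]
  constructor <;> linarith

end TVDual

section Empirical

variable {S : Type*} [DecidableEq S] {n : ℕ}

noncomputable def empiricalPmf (x : Fin n → S) (s : S) : ℝ :=
  ((univ.filter fun i => x i = s).card : ℝ) / n

lemma sum_empiricalPmf (x : Fin n → S) (B : Finset S) :
    ∑ s ∈ B, empiricalPmf x s = (∑ i, (B : Set S).indicator 1 (x i)) / n := by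
  simp only [empiricalPmf, ← sum_div, card_filter, Nat.cast_sum, Nat.cast_ite, Nat.cast_one,
    Nat.cast_zero]
  rw [sum_comm]
  congr 1
  refine sum_congr rfl fun i _ => ?_
  simp [Set.indicator_apply, eq_comm]

lemma isPmf_empiricalPmf [Fintype S] [NeZero n] (x : Fin n → S) : IsPmf (empiricalPmf x) := by
  refine ⟨fun s => by unfold empiricalPmf; positivity, ?_⟩
  rw [sum_empiricalPmf]
  simp [NeZero.ne]

end Empirical

section Hoeffding

open scoped NNReal

variable {Ω ι : Type*} [MeasurableSpace Ω] {μ : Measure Ω} [Fintype ι]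

lemma measureReal_mean_ge_le_of_iIndepFun [Nonempty ι] {Z : ι → Ω → ℝ} (hindep : iIndepFun Z μ)
    {c : ℝ≥0} (hZ : ∀ i, HasSubgaussianMGF (Z i) c μ) {t : ℝ} (ht : 0 ≤ t) :
    μ.real {ω | t ≤ (∑ i, Z i ω) / Fintype.card ι} ≤
      exp (-(Fintype.card ι * t ^ 2) / (2 * c)) := by
  have hcard : (0 : ℝ) < Fintype.card ι := Nat.cast_pos.2 Fintype.card_pos
  have hsum := HasSubgaussianMGF.measure_sum_ge_le_of_iIndepFun hindep (s := univ)
    (fun i _ => hZ i) (mul_nonneg hcard.le ht)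
  simp only [sum_const, card_univ, nsmul_eq_mul, NNReal.coe_mul, NNReal.coe_natCast] at hsum
  have hset : {ω | t ≤ (∑ i, Z i ω) / Fintype.card ι} = {ω | Fintype.card ι * t ≤ ∑ i, Z i ω} := by
    ext ω
    exact (le_div_iff₀ hcard).trans (by rw [mul_comm]; rfl)
  have hexp : -(Fintype.card ι * t) ^ 2 / (2 * (Fintype.card ι * c)) =
      Fintype.card ι * -(Fintype.card ι * t ^ 2) / (Fintype.card ι * (2 * c)) := by
    ring
  rw [hexp, mul_div_mul_left _ _ hcard.ne'] at hsum
  rwa [hset]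

variable [IsProbabilityMeasure μ]

lemma measureReal_abs_mean_sub_ge_le_of_mem_Icc [Nonempty ι] {Y : ι → Ω → ℝ}
    (hindep : iIndepFun Y μ) (hmeas : ∀ i, Measurable (Y i)) (hY : ∀ i ω, Y i ω ∈ Set.Icc 0 1) {P : ℝ}
    (hmean : ∀ i, μ[Y i] = P) {t : ℝ} (ht : 0 ≤ t) :
    μ.real {ω | t ≤ |(∑ i, Y i ω) / Fintype.card ι - P|} ≤
      2 * exp (-2 * Fintype.card ι * t ^ 2) := by
  have hcard : (0 : ℝ) < Fintype.card ι := Nat.cast_pos.2 Fintype.card_pos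
  set Z : ι → Ω → ℝ := fun i ω => Y i ω - P
  have hZ : ∀ i, HasSubgaussianMGF (Z i) (1 / 4) μ := fun i => by
    have h := hasSubgaussianMGF_of_mem_Icc (μ := μ) (hmeas i).aemeasurable (ae_of_all _ (hY i))
    rw [hmean i] at h
    convert h
    norm_num
  have hZindep : iIndepFun Z μ := hindep.comp _ fun _ => measurable_id.sub_const P
  have hmean_sub : ∀ ω, (∑ i, Y i ω) / Fintype.card ι - P = (∑ i, Z i ω) / Fintype.card ι := by
    intro ω
    rw [sum_sub_distrib, sum_const, card_univ, nsmul_eq_mul, _root_.sub_div,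
      mul_div_cancel_left₀ _ hcard.ne']
  have hupper := measureReal_mean_ge_le_of_iIndepFun hZindep hZ ht
  have hlower := measureReal_mean_ge_le_of_iIndepFun (Z := fun i ω => -Z i ω)
    (hZindep.comp (fun _ x => -x) fun _ => measurable_neg) (fun i => (hZ i).neg) ht
  have hexp : exp (-(Fintype.card ι * t ^ 2) / (2 * ((1 / 4 : ℝ≥0) : ℝ))) =
      exp (-2 * Fintype.card ι * t ^ 2) := by
    congr 1; push_cast; ring
  rw [hexp] at hupper hlower
  calc μ.real {ω | t ≤ |(∑ i, Y i ω) / Fintype.card ι - P|}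
      ≤ μ.real ({ω | t ≤ (∑ i, Z i ω) / Fintype.card ι} ∪
          {ω | t ≤ (∑ i, -Z i ω) / Fintype.card ι}) := by
        refine measureReal_mono (fun ω hω => ?_)
        simp only [Set.mem_ofPred_eq, hmean_sub, le_abs] at hω
        simpa [sum_neg_distrib, neg_div] using hω
    _ ≤ _ := measureReal_union_le _ _
    _ ≤ 2 * exp (-2 * Fintype.card ι * t ^ 2) := by linarith

end Hoeffding

section Sampling

variable {Ω S : Type*} [MeasurableSpace Ω] {μ : Measure Ω} [MeasurableSpace S]
  [MeasurableSingletonClass S] {p : S → ℝ}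

lemma measureReal_preimage_eq_sum {X : Ω → S} (hX : Measurable X) (hp : ∀ s, 0 ≤ p s)
    (hlaw : ∀ s, μ (X ⁻¹' {s}) = ENNReal.ofReal (p s)) (B : Finset S) :
    μ.real (X ⁻¹' B) = ∑ s ∈ B, p s := by
  rw [measureReal_def, ← sum_measure_preimage_singleton B fun s _ => hX (measurableSet_singleton s)]
  simp_rw [hlaw]
  rw [← ENNReal.ofReal_sum_of_nonneg fun s _ => hp s,
    ENNReal.toReal_ofReal (sum_nonneg fun s _ => hp s)]

lemma measureReal_abs_sum_empiricalPmf_sub_ge_le [IsProbabilityMeasure μ] [DecidableEq S]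
    {n : ℕ} [NeZero n] {X : Fin n → Ω → S} (hX : ∀ i, Measurable (X i))
    (hindep : iIndepFun X μ) (hp : ∀ s, 0 ≤ p s)
    (hlaw : ∀ i s, μ (X i ⁻¹' {s}) = ENNReal.ofReal (p s)) (B : Finset S) {t : ℝ} (ht : 0 ≤ t) :
    μ.real {ω | t ≤ |∑ s ∈ B, (empiricalPmf (fun i => X i ω) s - p s)|} ≤
      2 * exp (-2 * n * t ^ 2) := by
  set Y : Fin n → Ω → ℝ := fun i ω => (B : Set S).indicator 1 (X i ω)
  have hBmeas : MeasurableSet (B : Set S) := B.finite_toSet.measurableSet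
  have hYmeas : ∀ i, Measurable (Y i) := fun i => (measurable_one.indicator hBmeas).comp (hX i)
  have hY : ∀ i ω, Y i ω ∈ Set.Icc 0 1 := fun i ω => by
    by_cases h : X i ω ∈ (B : Set S) <;> simp [Y, h]
  have hmean : ∀ i, μ[Y i] = ∑ s ∈ B, p s := fun i => by
    change ∫ ω, (X i ⁻¹' B).indicator 1 ω ∂μ = _
    rw [integral_indicator_one (hX i hBmeas), measureReal_preimage_eq_sum (hX i) hp (hlaw i)]
  have hdev : ∀ ω, ∑ s ∈ B, (empiricalPmf (fun i => X i ω) s - p s) =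
      (∑ i, Y i ω) / Fintype.card (Fin n) - ∑ s ∈ B, p s := fun ω => by
    rw [sum_sub_distrib, sum_empiricalPmf, Fintype.card_fin]
  simp_rw [hdev]
  simpa using measureReal_abs_mean_sub_ge_le_of_mem_Icc
    (hindep.comp _ fun _ => measurable_one.indicator hBmeas) hYmeas hY hmean ht

lemma measurableSet_abs_sum_empiricalPmf_sub_ge [DecidableEq S] [Finite S] {n : ℕ}
    {X : Fin n → Ω → S} (hX : ∀ i, Measurable (X i)) (B : Finset S) (t : ℝ) :
    MeasurableSet {ω | t ≤ |∑ s ∈ B, (empiricalPmf (fun i => X i ω) s - p s)|} := by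
  have : Measurable fun ω => ∑ s ∈ B, (empiricalPmf (fun i => X i ω) s - p s) :=
    (measurable_of_countable fun x : Fin n → S => ∑ s ∈ B, (empiricalPmf x s - p s)).comp
      (measurable_pi_lambda _ hX)
  exact measurableSet_le measurable_const this.abs

end Sampling

lemma integral_le_add_mul_measureReal {Ω : Type*} [MeasurableSpace Ω] {μ : Measure Ω}
    [IsProbabilityMeasure μ] {f : Ω → ℝ} {E : Set Ω} (hE : MeasurableSet E) {a b : ℝ}
    (ha : 0 ≤ a) (hf0 : ∀ ω, 0 ≤ f ω) (hfE : ∀ ω ∉ E, f ω ≤ a) (hf : ∀ ω, f ω ≤ b) :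
    ∫ ω, f ω ∂μ ≤ a + b * μ.real E := by
  have hle : ∀ ω, f ω ≤ a + E.indicator (fun _ => b) ω := fun ω => by
    by_cases hω : ω ∈ E
    · simpa [hω] using (hf ω).trans (le_add_of_nonneg_left ha)
    · simpa [hω] using hfE ω hω
  have hint : Integrable (fun ω => a + E.indicator (fun _ => b) ω) μ :=
    (integrable_const a).add ((integrable_const b).indicator hE)
  calc ∫ ω, f ω ∂μ ≤ ∫ ω, a + E.indicator (fun _ => b) ω ∂μ :=
        integral_mono_of_nonneg (ae_of_all _ hf0) hint (ae_of_all _ hle)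
    _ = a + b * μ.real E := by
        rw [integral_add (integrable_const a) ((integrable_const b).indicator hE), integral_const,
          integral_indicator_const _ hE]
        simp [mul_comm]

section UniformBias

variable {S A Ω : Type*} [Fintype S] [Fintype A] [DecidableEq S] [MeasurableSpace S]
  [MeasurableSingletonClass S] [MeasurableSpace Ω] {μ : Measure Ω} [IsProbabilityMeasure μ]
  {n : ℕ} [NeZero n] {p : S × A → S → ℝ} {X : S × A → Fin n → Ω → S}

lemma integral_iSup_abs_fstarTV_empiricalPmf_sub_le {σ : ℝ} (hσ : 0 ≤ σ) {V : S → ℝ} {M : ℝ}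
    (hM : 0 ≤ M) (hV : ∀ s, 0 ≤ V s ∧ V s ≤ M) (hp : ∀ sa, IsPmf (p sa))
    (hXmeas : ∀ sa i, Measurable (X sa i)) (hXindep : ∀ sa, iIndepFun (X sa) μ)
    (hXlaw : ∀ sa i s, μ (X sa i ⁻¹' {s}) = ENNReal.ofReal (p sa s)) {t : ℝ} (ht : 0 ≤ t) :
    ∫ ω, (⨆ sa, |fstarTV σ (empiricalPmf (fun i => X sa i ω)) V - fstarTV σ (p sa) V|) ∂μ ≤
      M * t + M * ((Fintype.card S : ℝ) ^ 2 * Fintype.card A * (2 * exp (-2 * n * t ^ 2))) := by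
  set dev : S × A → Ω → S → ℝ := fun sa ω => empiricalPmf (fun i => X sa i ω) - p sa
  set E := ⋃ j : (S × A) × S, {ω | t ≤ |∑ s ∈ univ.filter (fun s => V j.2 ≤ V s), dev j.1 ω s|}
  have hEmeas : MeasurableSet E := .iUnion fun j =>
    measurableSet_abs_sum_empiricalPmf_sub_ge (hXmeas j.1) _ t
  have hE : μ.real E ≤ (Fintype.card S : ℝ) ^ 2 * Fintype.card A * (2 * exp (-2 * n * t ^ 2)) := by
    calc μ.real E ≤ ∑ j : (S × A) × S,
          μ.real {ω | t ≤ |∑ s ∈ univ.filter (fun s => V j.2 ≤ V s), dev j.1 ω s|} :=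
          measureReal_iUnion_fintype_le _
      _ ≤ ∑ _j : (S × A) × S, 2 * exp (-2 * n * t ^ 2) :=
          sum_le_sum fun j _ => measureReal_abs_sum_empiricalPmf_sub_ge_le (hXmeas j.1)
            (hXindep j.1) (hp j.1).1 (hXlaw j.1) _ ht
      _ = _ := by simp only [sum_const, card_univ, nsmul_eq_mul, Fintype.card_prod]; push_cast; ring
  have hbias : ∀ ω sa, |fstarTV σ (empiricalPmf (fun i => X sa i ω)) V - fstarTV σ (p sa) V|
      ≤ M * upperLevelDev V (dev sa ω) := fun ω sa =>
    abs_fstarTV_sub_le hσ (hp sa).1 (isPmf_empiricalPmf _).1 (fun s => (hV s).1) hM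
      (fun s => (hV s).2)
  have hgood : ∀ ω ∉ E, ∀ sa, upperLevelDev V (dev sa ω) ≤ t := fun ω hω sa =>
    Real.iSup_le (fun u => not_lt.1 fun h => hω (Set.mem_iUnion.2 ⟨(sa, u), h.le⟩)) ht
  calc _ ≤ M * t + M * μ.real E := by
        refine integral_le_add_mul_measureReal hEmeas (by positivity)
          (fun ω => Real.iSup_nonneg fun _ => abs_nonneg _) (fun ω hω => ?_) (fun ω => ?_)
        · exact Real.iSup_le (fun sa => (hbias ω sa).trans
            (mul_le_mul_of_nonneg_left (hgood ω hω sa) hM)) (by positivity)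
        · exact Real.iSup_le (fun sa => (hbias ω sa).trans (mul_le_of_le_one_right hM
            (upperLevelDev_sub_le_one V (hp sa) (isPmf_empiricalPmf _)))) hM
    _ ≤ _ := by gcongr

end UniformBias

lemma sq_mul_mul_exp_le_inv {a b n : ℝ} (ha : 1 ≤ a) (hb : 1 ≤ b) (hn : 1 ≤ n) :
    a ^ 2 * b * (2 * exp (-2 * n * (3 * sqrt ((2 * log n + log (18 * a * b)) / n)) ^ 2)) ≤
      1 / n := by
  set L := 2 * log n + log (18 * a * b)
  set K := n ^ 2 * (18 * a * b)
  have hL : 0 ≤ L := by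
    have := log_nonneg hn
    have := log_nonneg (show (1 : ℝ) ≤ 18 * a * b by nlinarith)
    positivity
  have hK : exp L = K := by
    rw [exp_add, exp_log (by positivity), show 2 * log n = log (n ^ 2) by simp [log_pow],
      exp_log (by positivity)]
  have hexp : exp (-2 * n * (3 * sqrt (L / n)) ^ 2) ≤ (K ^ 2)⁻¹ := by
    rw [mul_pow, sq_sqrt (by positivity), ← hK, ← exp_nat_mul, ← exp_neg]
    refine exp_le_exp.2 ?_
    field_simp
    push_cast
    linarith
  calc a ^ 2 * b * (2 * exp (-2 * n * (3 * sqrt (L / n)) ^ 2))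
      ≤ a ^ 2 * b * (2 * (K ^ 2)⁻¹) := by gcongr
    _ ≤ 1 / n := by
        rw [← div_eq_mul_inv, mul_div_assoc', div_le_div_iff₀ (by positivity) (by positivity)]
        have hn4 : n ≤ n ^ 4 := le_self_pow₀ hn (by norm_num)
        nlinarith [mul_le_mul_of_nonneg_left hn4 (by positivity : 0 ≤ a ^ 2 * b)]

lemma two_rpow_neg_half_eq_inv_sqrt (m : ℕ) :
    (2 : ℝ) ^ (-(((m : ℝ) + 1) / 2)) = (sqrt ((2 ^ (m + 1) : ℕ) : ℝ))⁻¹ := by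
  rw [sqrt_eq_rpow, Nat.cast_pow, Nat.cast_ofNat, ← rpow_natCast, ← rpow_mul zero_le_two,
    ← rpow_neg zero_le_two]
  push_cast
  ring_nf

theorem tv_expected_uniform_bias_general
    {S A : Type*} [Fintype S] [Fintype A] [Nonempty S] [Nonempty A] [DecidableEq S]
    [MeasurableSpace S] [MeasurableSingletonClass S]
    {Ω : Type*} [MeasurableSpace Ω] (μ : Measure Ω) [IsProbabilityMeasure μ]
    (σ : ℝ) (hσ : 0 ≤ σ)
    (rmax : ℝ)
    (γ : ℝ)
    (V : S → ℝ) (hV : ∀ s, 0 ≤ V s ∧ V s ≤ rmax / (1 - γ))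
    (p : S × A → S → ℝ) (hp : ∀ sa, IsPmf (p sa))
    (m : ℕ) (n : ℕ) (hn : n = 2 ^ (m + 1))
    (X : S × A → Fin n → Ω → S) (hXmeas : ∀ sa i, Measurable (X sa i))
    (hXindep : iIndepFun
        (fun q : (S × A) × Fin n => X q.1 q.2) μ)
    (hXlaw : ∀ sa i s', μ (X sa i ⁻¹' {s'}) = ENNReal.ofReal (p sa s')) :
    (∫ ω, (⨆ sa : S × A,
        |fstarTV σ
            (fun s => (((Finset.univ.filter (fun i => X sa i ω = s)).card : ℝ) / n)) V
          - fstarTV σ (p sa) V|) ∂μ)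
      ≤ (rmax / (1 - γ)) * (2 : ℝ) ^ (-(((m : ℝ) + 1) / 2)) *
          ((2 : ℝ) ^ (-(((m : ℝ) + 1) / 2))
            + 3 * Real.sqrt (2 * (m + 1) * Real.log 2
                + Real.log (18 * Fintype.card S * Fintype.card A))) := by
  obtain ⟨s₀⟩ := ‹Nonempty S›
  have : NeZero n := ⟨by rw [hn]; positivity⟩
  have hn1 : (1 : ℝ) ≤ n := by exact_mod_cast NeZero.one_le
  have hS : (1 : ℝ) ≤ Fintype.card S := Nat.one_le_cast.2 Fintype.card_pos
  have hA : (1 : ℝ) ≤ Fintype.card A := Nat.one_le_cast.2 Fintype.card_pos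
  set M := rmax / (1 - γ)
  have hM : 0 ≤ M := (hV s₀).1.trans (hV s₀).2
  have hlogn : 2 * (m + 1) * log 2 = 2 * log n := by
    rw [hn, Nat.cast_pow, log_pow]; push_cast; ring
  rw [hlogn]
  set L := 2 * log n + log (18 * Fintype.card S * Fintype.card A)
  have hL : 0 ≤ L := by
    have := log_nonneg hn1
    have := log_nonneg (show (1 : ℝ) ≤ 18 * Fintype.card S * Fintype.card A by nlinarith)
    positivity
  calc _ ≤ M * (3 * sqrt (L / n)) + M * (1 / n) := by
        refine (integral_iSup_abs_fstarTV_empiricalPmf_sub_le hσ hM hV hp hXmeas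
          (fun sa => (hXindep.precomp (Prod.mk_right_injective sa) :)) hXlaw
          (t := 3 * sqrt (L / n)) (by positivity)).trans ?_
        gcongr
        exact sq_mul_mul_exp_le_inv hS hA hn1
    _ = _ := by
        rw [hn, two_rpow_neg_half_eq_inv_sqrt, sqrt_div hL, ← hn]
        field_simp
        linear_combination M * mul_self_sqrt (Nat.cast_nonneg (α := ℝ) n)

/-- Expected uniform bias of empirical total-variation dual values. -/
theorem tv_expected_uniform_bias
    {S A : Type*} [Fintype S] [Fintype A] [Nonempty S] [Nonempty A] [DecidableEq S]
    [MeasurableSpace S] [MeasurableSingletonClass S]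
    {Ω : Type*} [MeasurableSpace Ω] (μ : Measure Ω) [IsProbabilityMeasure μ]
    (σ : ℝ) (hσ : 0 ≤ σ)
    (rmax : ℝ) (hrmax : 0 < rmax)
    (γ : ℝ) (hγ0 : 0 ≤ γ) (hγ1 : γ < 1)
    (V : S → ℝ) (hV : ∀ s, 0 ≤ V s ∧ V s ≤ rmax / (1 - γ))
    (p : S × A → S → ℝ) (hp : ∀ sa, IsPmf (p sa))
    (m : ℕ) (n : ℕ) (hn : n = 2 ^ (m + 1))
    (hnlog : 2 * (m + 1) * Real.log 2
        + Real.log (18 * Fintype.card S * Fintype.card A) ≤ n)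
    (X : S × A → Fin n → Ω → S) (hXmeas : ∀ sa i, Measurable (X sa i))
    (hXindep : iIndepFun
        (fun q : (S × A) × Fin n => X q.1 q.2) μ)
    (hXlaw : ∀ sa i s', μ (X sa i ⁻¹' {s'}) = ENNReal.ofReal (p sa s')) :
    (∫ ω, (⨆ sa : S × A,
        |fstarTV σ
            (fun s => (((Finset.univ.filter (fun i => X sa i ω = s)).card : ℝ) / n)) V
          - fstarTV σ (p sa) V|) ∂μ)
      ≤ (rmax / (1 - γ)) * (2 : ℝ) ^ (-(((m : ℝ) + 1) / 2)) *
          ((2 : ℝ) ^ (-(((m : ℝ) + 1) / 2))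
            + 3 * Real.sqrt (2 * (m + 1) * Real.log 2
                + Real.log (18 * Fintype.card S * Fintype.card A))) :=
  tv_expected_uniform_bias_general μ σ hσ rmax γ V hV p hp m n hn X hXmeas hXindep hXlaw
end
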